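/- Let A be a Banach algebra and φ a non-zero multiplicative linear functional on A. If there exists an element m in the fourth dual A**** such that a·m = φ(a)m for all a ∈ A and the canonical extension of φ to A**** takes the value 1 at m, then there exists M ∈ A** with a·M = φ(a)M for all a ∈ A and φ̃(M) = 1; that is, A is left φ-amenable (Goldstine/weak-* limit point argument in the proof of Theorem 2.2). -/

import Mathlib

/-!
We realize the bidual `(B ⊗_p B)**` of the projective tensor product of a Banach algebra `B`
with itself canonically as the dual of the Banach space `B →L[ℂ] B* ` of bounded bilinear
forms on `B` (the latter being isometrically isomorphic to `(B ⊗_p B)*`).  All the canonical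
Banach `B`-bimodule actions are spelled out explicitly through this identification.
The multiplication of the Banach algebra `B` is encoded as a bounded bilinear map
`μ : B →L[ℂ] B →L[ℂ] B` (for a Banach algebra `A`, `μ = ContinuousLinearMap.mul ℂ A`).
-/

noncomputable section

/-- The topological dual of a normed space (the definition `NormedSpace.Dual` of the older Mathlib,
restored with its old meaning and instances). -/
def NormedSpace.Dual (𝕜 : Type*) [NontriviallyNormedField 𝕜] (E : Type*) [SeminormedAddCommGroup E]
    [NormedSpace 𝕜 E] : Type _ :=
  E →L[𝕜] 𝕜

instance (𝕜 : Type*) [NontriviallyNormedField 𝕜] (E : Type*) [SeminormedAddCommGroup E]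
    [NormedSpace 𝕜 E] : SeminormedAddCommGroup (NormedSpace.Dual 𝕜 E) :=
  ContinuousLinearMap.toSeminormedAddCommGroup

instance (𝕜 : Type*) [NontriviallyNormedField 𝕜] (E : Type*) [SeminormedAddCommGroup E]
    [NormedSpace 𝕜 E] : NormedSpace 𝕜 (NormedSpace.Dual 𝕜 E) :=
  ContinuousLinearMap.toNormedSpace

instance (𝕜 : Type*) [NontriviallyNormedField 𝕜] (E : Type*) [SeminormedAddCommGroup E]
    [NormedSpace 𝕜 E] : FunLike (NormedSpace.Dual 𝕜 E) E 𝕜 :=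
  ContinuousLinearMap.funLike

instance (𝕜 : Type*) [NontriviallyNormedField 𝕜] (E : Type*) [SeminormedAddCommGroup E]
    [NormedSpace 𝕜 E] : LinearMapClass (NormedSpace.Dual 𝕜 E) 𝕜 E 𝕜 :=
  inferInstanceAs (LinearMapClass (E →L[𝕜] 𝕜) 𝕜 E 𝕜)

instance (𝕜 : Type*) [NontriviallyNormedField 𝕜] (E : Type*) [SeminormedAddCommGroup E]
    [NormedSpace 𝕜 E] : Inhabited (NormedSpace.Dual 𝕜 E) :=
  ⟨0⟩

instance (𝕜 : Type*) [NontriviallyNormedField 𝕜] (E : Type*) [NormedAddCommGroup E]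
    [NormedSpace 𝕜 E] : NormedAddCommGroup (NormedSpace.Dual 𝕜 E) :=
  ContinuousLinearMap.toNormedAddCommGroup

open ContinuousLinearMap NormedSpace

/-- The space of bounded bilinear forms on `B`, canonically the dual of the projective
tensor product `B ⊗_p B`. -/
abbrev BilForm (B : Type*) [NormedAddCommGroup B] [NormedSpace ℂ B] : Type _ :=
  B →L[ℂ] Dual ℂ B

/-- The bidual of the projective tensor product `B ⊗_p B`, realized canonically as the dual of
the Banach space of bounded bilinear forms on `B`. -/
abbrev TensorBidual (B : Type*) [NormedAddCommGroup B] [NormedSpace ℂ B] : Type _ :=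
  Dual ℂ (BilForm B)

/-- The bidual `B**` of a normed space `B`. -/
abbrev Bidual (B : Type*) [NormedAddCommGroup B] [NormedSpace ℂ B] : Type _ :=
  Dual ℂ (Dual ℂ B)

variable {B : Type*} [NormedAddCommGroup B] [NormedSpace ℂ B]

/-- The left action of `a ∈ B` (with multiplication `μ`) on `(B ⊗_p B)**`:
`(a • T) β = T ((x, y) ↦ β (a x, y))`, the canonical bidual extension of the
`B`-bimodule action `a • (x ⊗ y) = (a x) ⊗ y` on `B ⊗_p B`. -/
def tensorLSmul (μ : B →L[ℂ] B →L[ℂ] B) (a : B) (T : TensorBidual B) : TensorBidual B :=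
  T.comp ((compL ℂ B B (Dual ℂ B)).flip (μ a))

/-- The right action of `a ∈ B` on `(B ⊗_p B)**`:
`(T • a) β = T ((x, y) ↦ β (x, y a))`, the canonical bidual extension of the
`B`-bimodule action `(x ⊗ y) • a = x ⊗ (y a)` on `B ⊗_p B`. -/
def tensorRSmul (μ : B →L[ℂ] B →L[ℂ] B) (T : TensorBidual B) (a : B) : TensorBidual B :=
  T.comp (compL ℂ B (Dual ℂ B) (Dual ℂ B) ((compL ℂ B B ℂ).flip (μ.flip a)))

/-- `π_B^* ψ`, the image of a functional `ψ ∈ B*` under the adjoint of the product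
morphism `π_B : B ⊗_p B → B`; as a bilinear form it is `(x, y) ↦ ψ (x y)`.  Thus
`π_B** T ψ = T (piDual μ ψ)` for `T ∈ (B ⊗_p B)**`. -/
def piDual (μ : B →L[ℂ] B →L[ℂ] B) (ψ : Dual ℂ B) : BilForm B :=
  (compL ℂ B B ℂ ψ).comp μ

/-- The left action of `a ∈ B` on the bidual `B**`: `(a • m) f = m (f ∘ (a * ·))`. -/
def bidualLSmul (μ : B →L[ℂ] B →L[ℂ] B) (a : B) (m : Bidual B) : Bidual B :=
  m.comp ((compL ℂ B B ℂ).flip (μ a))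

/-- A Banach algebra `B` (with multiplication `μ` and a multiplicative functional `ψ`) is
*left `ψ`-biflat* if there is a bounded linear map `ρ : B → (B ⊗_p B)**` with
`ρ (a b) = ψ (b) ρ (a) = a • ρ (b)` for all `a, b ∈ B`, and `ψ̃ ∘ π_B** ∘ ρ = ψ`
(note `(ψ̃ ∘ π_B**) T = T (piDual μ ψ)`). -/
def IsLeftBiflat (μ : B →L[ℂ] B →L[ℂ] B) (ψ : Dual ℂ B) : Prop :=
  ∃ ρ : B →L[ℂ] TensorBidual B,
    (∀ a b : B, ρ (μ a b) = ψ b • ρ a ∧ ρ (μ a b) = tensorLSmul μ a (ρ b)) ∧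
    ∀ a : B, ρ a (piDual μ ψ) = ψ a

/-- A Banach algebra `B` is *left `ψ`-amenable* if there is `m ∈ B**` with
`a • m = ψ (a) m` for all `a ∈ B` and `ψ̃ (m) = m (ψ) = 1`. -/
def IsLeftAmenable (μ : B →L[ℂ] B →L[ℂ] B) (ψ : Dual ℂ B) : Prop :=
  ∃ m : Bidual B, (∀ (a : B) (f : Dual ℂ B), m (f.comp (μ a)) = ψ a * m f) ∧ m ψ = 1

/-- Auxiliary map for the first Arens product: `arensAux μ f a = f · a`, where
`(f · a) (b) = f (a b)`. -/
def arensAux (μ : B →L[ℂ] B →L[ℂ] B) : Dual ℂ B →L[ℂ] (B →L[ℂ] Dual ℂ B) :=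
  ((compL ℂ B (B →L[ℂ] B) (Dual ℂ B)).flip μ).comp (compL ℂ B B ℂ)

/-- Second auxiliary map for the first Arens product: `arensAux₂ μ n f = n · f`, where
`(n · f) (a) = n (f · a)`. -/
def arensAux₂ (μ : B →L[ℂ] B →L[ℂ] B) : Bidual B →L[ℂ] (Dual ℂ B →L[ℂ] Dual ℂ B) :=
  ((compL ℂ (Dual ℂ B) (B →L[ℂ] Dual ℂ B) (Dual ℂ B)).flip (arensAux μ)).comp
    (compL ℂ B (Dual ℂ B) ℂ)

/-- The *first Arens product* on the bidual `B**` of a Banach algebra `B` with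
multiplication `μ`: `(m □ n) (f) = m (n · f)`, where `(n · f) (a) = n (f · a)` and
`(f · a) (b) = f (a b)`. -/
def arens (μ : B →L[ℂ] B →L[ℂ] B) : Bidual B →L[ℂ] Bidual B →L[ℂ] Bidual B :=
  ((compL ℂ (Bidual B) (Dual ℂ B →L[ℂ] Dual ℂ B) (Bidual B)).flip (arensAux₂ μ)).comp
    (compL ℂ (Dual ℂ B) (Dual ℂ B) ℂ)

/-- `ψ̃`, the canonical extension of a functional `ψ ∈ B*` to a functional on `B**`
(given by `ψ̃ (m) = m (ψ)`); if `ψ` is a character of `B`, this is the unique extension of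
`ψ` to a character of `B**` with the first Arens product. -/
def charExt (ψ : Dual ℂ B) : Dual ℂ (Bidual B) :=
  ContinuousLinearMap.apply ℂ ℂ ψ

/-- The map `f ↦ f · a` on `B*`, where `(f · a) (b) = f (a b)`. -/
def dualShift (μ : B →L[ℂ] B →L[ℂ] B) (a : B) : Dual ℂ B →L[ℂ] Dual ℂ B :=
  (compL ℂ B B ℂ).flip (μ a)

/-- The left action `T ↦ a • T` on `B**` as a bounded operator, `(a • T) f = T (f · a)`. -/
def bidualShift (μ : B →L[ℂ] B →L[ℂ] B) (a : B) : Bidual B →L[ℂ] Bidual B :=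
  (compL ℂ (Dual ℂ B) (Dual ℂ B) ℂ).flip (dualShift μ a)

/-- The map `F ↦ F · a` on `B***`, `(F · a) (T) = F (a • T)`. -/
def tridualShift (μ : B →L[ℂ] B →L[ℂ] B) (a : B) : Dual ℂ (Bidual B) →L[ℂ] Dual ℂ (Bidual B) :=
  (compL ℂ (Bidual B) (Bidual B) ℂ).flip (bidualShift μ a)

/-!
Restricting `m ∈ A****` to the canonical copy of `A*` in `A***` (i.e. applying the adjoint of
`ι : A* → A***`) gives an element of `A**`. Since `ι (f · a) = (ι f) · a`,
this restriction is a map of left `A`-modules; hence it sends `m` to a `φ`-invariant element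
of `A**`, whose value at `φ` is `m (φ̃) = 1`.
-/

def fourthDualToBidual : Dual ℂ (Dual ℂ (Bidual B)) →L[ℂ] Bidual B :=
  (compL ℂ (Dual ℂ B) (Dual ℂ (Bidual B)) ℂ).flip (inclusionInDoubleDual ℂ (Dual ℂ B))

theorem fourthDualToBidual_apply_charExt (m : Dual ℂ (Dual ℂ (Bidual B))) (ψ : Dual ℂ B) :
    fourthDualToBidual m ψ = m (charExt ψ) :=
  rfl

theorem bidualLSmul_fourthDualToBidual (μ : B →L[ℂ] B →L[ℂ] B) (a : B)
    (m : Dual ℂ (Dual ℂ (Bidual B))) :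
    bidualLSmul μ a (fourthDualToBidual m) = fourthDualToBidual (m.comp (tridualShift μ a)) :=
  rfl

theorem isLeftAmenable_of_bidualLSmul_eq {μ : B →L[ℂ] B →L[ℂ] B} {ψ : Dual ℂ B} (M : Bidual B)
    (hM : ∀ a : B, bidualLSmul μ a M = ψ a • M) (hM_one : M ψ = 1) :
    IsLeftAmenable μ ψ :=
  ⟨M, fun a f => congrArg (· f) (hM a), hM_one⟩

variable {A : Type*} [NonUnitalNormedRing A] [NormedSpace ℂ A]
  [IsScalarTower ℂ A A] [SMulCommClass ℂ A A] [CompleteSpace A]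

theorem left_phi_amenable_of_fourth_dual_element_general
    (φ : A →L[ℂ] ℂ)
    (m : Dual ℂ (Dual ℂ (Bidual A)))
    (hm : ∀ a : A, m.comp (tridualShift (ContinuousLinearMap.mul ℂ A) a) = φ a • m)
    (hm_one : m (charExt φ) = 1) :
    (∃ M : Bidual A,
      (∀ a : A, bidualLSmul (ContinuousLinearMap.mul ℂ A) a M = φ a • M) ∧ M φ = 1) ∧
    IsLeftAmenable (ContinuousLinearMap.mul ℂ A) φ := by
  have hM : ∀ a : A, bidualLSmul (ContinuousLinearMap.mul ℂ A) a (fourthDualToBidual m) =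
      φ a • fourthDualToBidual m := fun a => by
    rw [bidualLSmul_fourthDualToBidual, hm, map_smul]
  have hM_one : fourthDualToBidual m φ = 1 := (fourthDualToBidual_apply_charExt m φ).trans hm_one
  exact ⟨⟨_, hM, hM_one⟩, isLeftAmenable_of_bidualLSmul_eq _ hM hM_one⟩

/-- the Goldstine/weak-* limit point argument in the proof of Theorem 2.2:
if there is an element `m` of the fourth dual `A****` with `a • m = φ (a) m` for all
`a ∈ A` (where `a • m = m ∘ (F ↦ F · a)` is the canonical left `A`-action on `A****`) and
the canonical extension of `φ` to `A****` takes the value `1` at `m` (i.e. `m (φ̃) = 1`),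
then there exists `M ∈ A**` with `a • M = φ (a) M` for all `a ∈ A` and `φ̃ (M) = M (φ) = 1`;
that is, `A` is left `φ`-amenable. -/
theorem left_phi_amenable_of_fourth_dual_element
    (φ : A →L[ℂ] ℂ) (hφ_ne : φ ≠ 0)
    (hφ_mul : ∀ a b : A, φ (a * b) = φ a * φ b)
    (m : Dual ℂ (Dual ℂ (Bidual A)))
    (hm : ∀ a : A, m.comp (tridualShift (ContinuousLinearMap.mul ℂ A) a) = φ a • m)
    (hm_one : m (charExt φ) = 1) :
    (∃ M : Bidual A,
      (∀ a : A, bidualLSmul (ContinuousLinearMap.mul ℂ A) a M = φ a • M) ∧ M φ = 1) ∧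
    IsLeftAmenable (ContinuousLinearMap.mul ℂ A) φ :=
  left_phi_amenable_of_fourth_dual_element_general φ m hm hm_one
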